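/- arXiv:1902.01525 — 3 statements merged into one kernel-verified Lean document; each statement's English description precedes it below -/
import Mathlib

section
/- Let (S, Σ) be a measurable space, {μ_n} a sequence of probability measures on S converging setwise to a probability measure μ, and {f_n} a sequence of measurable real-valued functions on S. Suppose there exists a sequence of measurable real-valued functions {g_n} on S with f_n(s) ≥ g_n(s) for all n and all s ∈ S such that −∞ < ∫_S limsup_{n→∞} g_n(s) μ(ds) ≤ liminf_{n→∞} ∫_S g_n(s) μ_n(ds). Then ∫_S liminf_{n→∞} f_n(s) μ(ds) ≤ liminf_{n→∞} ∫_S f_n(s) μ_n(ds), provided all integrals appearing are defined. -/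
open MeasureTheory Filter Metric Topology
open scoped ENNReal

/-- The positive part of an extended real, as a value in `ℝ≥0∞`. -/
noncomputable def EReal.posENN (x : EReal) : ℝ≥0∞ := (max x 0).abs

/-- The negative part of an extended real, as a value in `ℝ≥0∞`. -/
noncomputable def EReal.negENN (x : EReal) : ℝ≥0∞ := (max (-x) 0).abs

/-- The integral of an extended-real-valued function: `∫ f⁺ dμ − ∫ f⁻ dμ` (in `EReal`). -/
noncomputable def eIntegral {S : Type*} [MeasurableSpace S]
    (μ : Measure S) (f : S → EReal) : EReal :=
  ((∫⁻ s, (f s).posENN ∂μ : ℝ≥0∞) : EReal) - ((∫⁻ s, (f s).negENN ∂μ : ℝ≥0∞) : EReal)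

/-- The integral of `f` w.r.t. `μ` is defined: at least one of `∫ f⁺ dμ`, `∫ f⁻ dμ` is finite. -/
def IntegralDefined {S : Type*} [MeasurableSpace S] (μ : Measure S) (f : S → EReal) : Prop :=
  (∫⁻ s, (f s).posENN ∂μ) ≠ ⊤ ∨ (∫⁻ s, (f s).negENN ∂μ) ≠ ⊤

/-- `{μ_n}` converges setwise to `μ`: `μ_n(C) → μ(C)` for every measurable set `C`. -/
def SetwiseConv {S : Type*} [MeasurableSpace S] (μ : ℕ → Measure S) (ν : Measure S) : Prop :=
  ∀ C : Set S, MeasurableSet C → Tendsto (fun n => μ n C) atTop (𝓝 (ν C))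

/-!
Split `f n = h n + g n` with `h n = (f n - g n)⁺ ≥ 0`. For nonnegative functions Fatou's lemma
survives setwise convergence: integrals of simple functions with finite values converge, so
`∫⁻ w dν ≤ liminf ∫⁻ w dμ n`, and `∫⁻ liminf h n dν` is the supremum of the integrals of the
increasing infima `⨅ i ≥ k, h i`. Off the `ν`-null set where `limsup g = ⊥` we have
`liminf f ≤ liminf h + limsup g`; integrate, and use the hypothesis on `∫ limsup g`. The finiteness
of the negative parts of `limsup g` and (eventually) of `g n` makes the integrals additive.
-/

namespace EReal

lemma posENN_eq_toENNReal (x : EReal) : x.posENN = x.toENNReal := by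
  apply coe_ennreal_injective
  rw [coe_toENNReal_eq_max, max_comm]
  induction x with
  | bot => simp [posENN]
  | top => simp [posENN]
  | coe r =>
    rw [posENN, ← coe_zero, ← coe_strictMono.monotone.map_max, coe_abs,
      abs_of_nonneg (le_max_right r 0)]

lemma negENN_eq_toENNReal (x : EReal) : x.negENN = (-x).toENNReal :=
  posENN_eq_toENNReal (-x)

lemma coe_toENNReal_sub_coe_toENNReal_neg (x : EReal) :
    (x.toENNReal : EReal) - (-x).toENNReal = x := by
  rcases le_total 0 x with hx | hx
  · rw [toENNReal_of_nonpos (x := -x) (by simpa using hx), coe_toENNReal hx, coe_ennreal_zero,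
      sub_zero]
  · rw [toENNReal_of_nonpos hx, coe_toENNReal (EReal.neg_nonneg.2 hx), coe_ennreal_zero,
      zero_sub, neg_neg]

lemma toENNReal_coe_ennreal_sub (p n : ℝ≥0∞) : ((p : EReal) - n).toENNReal = p - n := by
  rw [toENNReal_sub (coe_ennreal_nonneg n), toENNReal_coe, toENNReal_coe]

lemma neg_coe_ennreal_sub {n : ℝ≥0∞} (hn : n ≠ ⊤) (p : ℝ≥0∞) :
    -((p : EReal) - n) = n - p := by
  rw [neg_sub (Or.inl (coe_ennreal_ne_bot p)) (Or.inr (by simpa using hn)), add_comm,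
    sub_eq_add_neg]

lemma coe_ennreal_sub_eq_of_add_eq {A B p n : ℝ≥0∞} (hB : B ≠ ⊤) (hn : n ≠ ⊤)
    (h : A + n = B + p) : (A : EReal) - B = p - n := by
  rw [← coe_ennreal_toReal hB, ← coe_ennreal_toReal hn]
  calc (A : EReal) - B.toReal = A + n.toReal - n.toReal - B.toReal := by
        rw [add_sub_cancel_right]
    _ = B.toReal + p - n.toReal - B.toReal := by
        rw [coe_ennreal_toReal hB, coe_ennreal_toReal hn, ← coe_ennreal_add, h, coe_ennreal_add]
    _ = p - n.toReal := by rw [add_sub_assoc, add_sub_cancel_left]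

lemma liminf_coe_ennreal {α : Type*} {l : Filter α} [l.NeBot] (a : α → ℝ≥0∞) :
    liminf (fun i => (a i : EReal)) l = ((liminf a l : ℝ≥0∞) : EReal) :=
  (Monotone.map_liminf_of_continuousAt (fun _ _ => coe_ennreal_le_coe_ennreal_iff.2) a
    continuous_coe_ennreal_ereal.continuousAt).symm

lemma liminf_coe_ennreal_add_le {α : Type*} {l : Filter α} [l.NeBot] (a : α → ℝ≥0∞)
    {b : α → EReal} (hb : limsup b l ≠ ⊥) :
    liminf (fun i => (a i : EReal) + b i) l ≤ ((liminf a l : ℝ≥0∞) : EReal) + limsup b l := by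
  have ha : liminf (fun i => (a i : EReal)) l ≠ ⊥ := by
    rw [liminf_coe_ennreal]
    exact coe_ennreal_ne_bot _
  rw [← liminf_coe_ennreal, add_comm]
  simp_rw [add_comm (a _ : EReal)]
  exact liminf_add_le (Or.inl hb) (Or.inr ha)

end EReal

section eIntegral

variable {S : Type*} [MeasurableSpace S] {μ : Measure S}

lemma eIntegral_eq_lintegral_toENNReal_sub (f : S → EReal) :
    eIntegral μ f = (∫⁻ s, (f s).toENNReal ∂μ : EReal) - ∫⁻ s, (-f s).toENNReal ∂μ := by
  simp only [eIntegral, EReal.posENN_eq_toENNReal, EReal.negENN_eq_toENNReal]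

lemma lintegral_toENNReal_neg_ne_top_of_bot_lt_eIntegral {f : S → EReal}
    (h : ⊥ < eIntegral μ f) : ∫⁻ s, (-f s).toENNReal ∂μ ≠ ⊤ := by
  intro htop
  rw [eIntegral_eq_lintegral_toENNReal_sub, htop, EReal.coe_ennreal_top, EReal.sub_top] at h
  exact h.ne rfl

lemma ae_ne_bot_of_lintegral_toENNReal_neg_ne_top {f : S → EReal} (hf : Measurable f)
    (h : ∫⁻ s, (-f s).toENNReal ∂μ ≠ ⊤) : ∀ᵐ s ∂μ, f s ≠ ⊥ := by
  filter_upwards [ae_lt_top hf.neg.ereal_toENNReal h] with s hs hbot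
  simp [hbot] at hs

lemma eIntegral_mono_ae {f g : S → EReal} (h : f ≤ᵐ[μ] g) :
    eIntegral μ f ≤ eIntegral μ g := by
  simp only [eIntegral_eq_lintegral_toENNReal_sub]
  refine EReal.sub_le_sub ?_ ?_ <;> refine EReal.coe_ennreal_le_coe_ennreal_iff.2 ?_
  · exact lintegral_mono_ae (h.mono fun s hs => EReal.toENNReal_le_toENNReal hs)
  · exact lintegral_mono_ae (h.mono fun s hs =>
      EReal.toENNReal_le_toENNReal (EReal.neg_le_neg_iff.2 hs))

lemma eIntegral_coe_sub {P N : S → ℝ≥0∞} (hP : Measurable P) (hN : Measurable N)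
    (hN_ne_top : ∫⁻ s, N s ∂μ ≠ ⊤) :
    eIntegral μ (fun s => (P s : EReal) - N s) = (∫⁻ s, P s ∂μ : EReal) - ∫⁻ s, N s ∂μ := by
  have hneg : ∫⁻ s, (-((P s : EReal) - N s)).toENNReal ∂μ = ∫⁻ s, N s - P s ∂μ := by
    refine lintegral_congr_ae ?_
    -- only a.e.: at `P s = N s = ⊤` the left side is `(-(⊤ - ⊤)).toENNReal = ⊤` but `N s - P s = 0`
    filter_upwards [ae_lt_top hN hN_ne_top] with s hs
    rw [EReal.neg_coe_ennreal_sub hs.ne, EReal.toENNReal_coe_ennreal_sub]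
  rw [eIntegral_eq_lintegral_toENNReal_sub, hneg]
  simp only [EReal.toENNReal_coe_ennreal_sub]
  refine EReal.coe_ennreal_sub_eq_of_add_eq
    (ne_top_of_le_ne_top hN_ne_top (lintegral_mono fun s => tsub_le_self)) hN_ne_top ?_
  rw [← lintegral_add_right _ hN, ← lintegral_add_right _ hP]
  simp only [tsub_add_eq_max, max_comm]

lemma eIntegral_coe_add {φ : S → ℝ≥0∞} {ψ : S → EReal} (hφ : Measurable φ)
    (hψ : Measurable ψ) (hψ_neg : ∫⁻ s, (-ψ s).toENNReal ∂μ ≠ ⊤) :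
    eIntegral μ (fun s => (φ s : EReal) + ψ s) = (∫⁻ s, φ s ∂μ : EReal) + eIntegral μ ψ := by
  have hsplit : (fun s => (φ s : EReal) + ψ s)
      = fun s => ((φ s + (ψ s).toENNReal : ℝ≥0∞) : EReal) - (-ψ s).toENNReal := by
    ext s
    rw [EReal.coe_ennreal_add, add_sub_assoc, EReal.coe_toENNReal_sub_coe_toENNReal_neg]
  rw [hsplit, eIntegral_coe_sub (P := fun s => φ s + (ψ s).toENNReal)
      (N := fun s => (-ψ s).toENNReal) (hφ.add hψ.ereal_toENNReal) hψ.neg.ereal_toENNReal hψ_neg,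
    lintegral_add_left hφ, EReal.coe_ennreal_add, add_sub_assoc,
    eIntegral_eq_lintegral_toENNReal_sub]

end eIntegral

section SetwiseConv

variable {S : Type*} [MeasurableSpace S] {μ : ℕ → Measure S} {ν : Measure S}

lemma MeasureTheory.SimpleFunc.tendsto_lintegral_of_setwiseConv (hsw : SetwiseConv μ ν)
    (φ : SimpleFunc S ℝ≥0∞) (hφ : ∀ s, φ s ≠ ⊤) :
    Tendsto (fun n => φ.lintegral (μ n)) atTop (𝓝 (φ.lintegral ν)) := by
  refine tendsto_finsetSum _ fun x hx => ?_
  obtain ⟨s, rfl⟩ := SimpleFunc.mem_range.1 hx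
  exact ENNReal.Tendsto.const_mul (hsw _ (φ.measurableSet_preimage _)) (Or.inr (hφ s))

lemma lintegral_le_liminf_of_setwiseConv (hsw : SetwiseConv μ ν) {w : S → ℝ≥0∞}
    (hw : Measurable w) : ∫⁻ s, w s ∂ν ≤ liminf (fun n => ∫⁻ s, w s ∂μ n) atTop := by
  rw [lintegral_eq_iSup_eapprox_lintegral hw]
  refine iSup_le fun k => ?_
  set φ := SimpleFunc.eapprox w k
  have hφ : Tendsto (fun n => φ.lintegral (μ n)) atTop (𝓝 (φ.lintegral ν)) :=
    φ.tendsto_lintegral_of_setwiseConv hsw fun s => (SimpleFunc.eapprox_lt_top w k s).ne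
  rw [← hφ.liminf_eq]
  refine liminf_le_liminf (Eventually.of_forall fun n => ?_)
  rw [← SimpleFunc.lintegral_eq_lintegral]
  exact lintegral_mono fun s =>
    (le_iSup (fun m => SimpleFunc.eapprox w m s) k).trans_eq (SimpleFunc.iSup_eapprox_apply hw s)

theorem lintegral_liminf_le_liminf_of_setwiseConv (hsw : SetwiseConv μ ν) {H : ℕ → S → ℝ≥0∞}
    (hH : ∀ n, Measurable (H n)) :
    ∫⁻ s, liminf (fun n => H n s) atTop ∂ν ≤ liminf (fun n => ∫⁻ s, H n s ∂μ n) atTop := by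
  set w : ℕ → S → ℝ≥0∞ := fun k s => ⨅ i ≥ k, H i s
  have hw : ∀ k, Measurable (w k) := fun k => .iInf fun i => .iInf fun _ => hH i
  calc ∫⁻ s, liminf (fun n => H n s) atTop ∂ν = ∫⁻ s, ⨆ k, w k s ∂ν := by
        simp only [liminf_eq_iSup_iInf_of_nat, w]
    _ = ⨆ k, ∫⁻ s, w k s ∂ν :=
        lintegral_iSup hw fun k k' hk s => le_iInf₂ fun i hi => iInf₂_le i (hk.trans hi)
    _ ≤ liminf (fun n => ∫⁻ s, H n s ∂μ n) atTop := by
        refine iSup_le fun k => (lintegral_le_liminf_of_setwiseConv hsw (hw k)).trans ?_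
        refine liminf_le_liminf ?_
        filter_upwards [eventually_ge_atTop k] with n hn
        exact lintegral_mono fun s => iInf₂_le n hn

theorem eIntegral_liminf_coe_add_le_liminf (hsw : SetwiseConv μ ν) {H : ℕ → S → ℝ≥0∞}
    (hH : ∀ n, Measurable (H n)) {G : ℕ → S → EReal} (hG : ∀ n, Measurable (G n))
    (hbd : ⊥ < eIntegral ν (fun s => limsup (fun n => G n s) atTop))
    (hle : eIntegral ν (fun s => limsup (fun n => G n s) atTop)
      ≤ liminf (fun n => eIntegral (μ n) (G n)) atTop) :
    eIntegral ν (fun s => liminf (fun n => (H n s : EReal) + G n s) atTop)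
      ≤ liminf (fun n => eIntegral (μ n) (fun s => (H n s : EReal) + G n s)) atTop := by
  set L : S → EReal := fun s => limsup (fun n => G n s) atTop
  have hL : Measurable L := .limsup hG
  have hL_neg := lintegral_toENNReal_neg_ne_top_of_bot_lt_eIntegral hbd
  have hpointwise : ∀ᵐ s ∂ν, liminf (fun n => (H n s : EReal) + G n s) atTop
      ≤ ((liminf (fun n => H n s) atTop : ℝ≥0∞) : EReal) + L s := by
    filter_upwards [ae_ne_bot_of_lintegral_toENNReal_neg_ne_top hL hL_neg] with s hs
    exact EReal.liminf_coe_ennreal_add_le _ hs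
  have hG_neg : ∀ᶠ n in atTop, ∫⁻ s, (-G n s).toENNReal ∂μ n ≠ ⊤ :=
    (eventually_lt_of_lt_liminf (hbd.trans_le hle)).mono fun _ =>
      lintegral_toENNReal_neg_ne_top_of_bot_lt_eIntegral
  calc eIntegral ν (fun s => liminf (fun n => (H n s : EReal) + G n s) atTop)
      ≤ eIntegral ν (fun s => ((liminf (fun n => H n s) atTop : ℝ≥0∞) : EReal) + L s) :=
        eIntegral_mono_ae hpointwise
    _ = (∫⁻ s, liminf (fun n => H n s) atTop ∂ν : EReal) + eIntegral ν L :=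
        eIntegral_coe_add (.liminf hH) hL hL_neg
    _ ≤ liminf (fun n => (∫⁻ s, H n s ∂μ n : EReal)) atTop
          + liminf (fun n => eIntegral (μ n) (G n)) atTop := by
        rw [EReal.liminf_coe_ennreal]
        gcongr
        exact EReal.coe_ennreal_le_coe_ennreal_iff.2
          (lintegral_liminf_le_liminf_of_setwiseConv hsw hH)
    _ ≤ liminf (fun n => (∫⁻ s, H n s ∂μ n : EReal) + eIntegral (μ n) (G n)) atTop :=
        EReal.le_liminf_add
    _ = liminf (fun n => eIntegral (μ n) (fun s => (H n s : EReal) + G n s)) atTop :=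
        liminf_congr (hG_neg.mono fun n hn => (eIntegral_coe_add (hH n) (hG n) hn).symm)

end SetwiseConv

theorem fatou_setwise_prob_general {S : Type*} [MeasurableSpace S]
    (μ : ℕ → Measure S) (ν : Measure S)
    (hsw : SetwiseConv μ ν)
    (f : ℕ → S → ℝ) (hf : ∀ n, Measurable (f n))
    (g : ℕ → S → ℝ) (hg : ∀ n, Measurable (g n))
    (hfg : ∀ n s, g n s ≤ f n s)
    (hgbd : (⊥ : EReal) < eIntegral ν (fun s => limsup (fun n => ((g n s : ℝ) : EReal)) atTop))
    (hgle : eIntegral ν (fun s => limsup (fun n => ((g n s : ℝ) : EReal)) atTop)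
      ≤ liminf (fun n => eIntegral (μ n) (fun s => ((g n s : ℝ) : EReal))) atTop) :
    eIntegral ν (fun s => liminf (fun n => ((f n s : ℝ) : EReal)) atTop)
      ≤ liminf (fun n => eIntegral (μ n) (fun s => ((f n s : ℝ) : EReal))) atTop := by
  have hsplit : ∀ n s,
      ((f n s : ℝ) : EReal) = (ENNReal.ofReal (f n s - g n s) : EReal) + g n s := by
    intro n s
    rw [EReal.coe_ennreal_ofReal, max_eq_left (sub_nonneg.2 (hfg n s)), ← EReal.coe_add,
      sub_add_cancel]
  simp only [hsplit]
  exact eIntegral_liminf_coe_add_le_liminf hsw (fun n => ((hf n).sub (hg n)).ennreal_ofReal)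
    (fun n => (hg n).coe_real_ereal) hgbd hgle

/-- Fatou's lemma for setwise converging probabilities
(Feinberg–Kasyanov–Zgurovsky, Theorem 4.1 of FKZTVP). -/
theorem fatou_setwise_prob {S : Type*} [MeasurableSpace S]
    (μ : ℕ → Measure S) (ν : Measure S)
    (hμ : ∀ n, IsProbabilityMeasure (μ n)) (hν : IsProbabilityMeasure ν)
    (hsw : SetwiseConv μ ν)
    (f : ℕ → S → ℝ) (hf : ∀ n, Measurable (f n))
    (g : ℕ → S → ℝ) (hg : ∀ n, Measurable (g n))
    (hfg : ∀ n s, g n s ≤ f n s)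
    (hgbd : (⊥ : EReal) < eIntegral ν (fun s => limsup (fun n => ((g n s : ℝ) : EReal)) atTop))
    (hgle : eIntegral ν (fun s => limsup (fun n => ((g n s : ℝ) : EReal)) atTop)
      ≤ liminf (fun n => eIntegral (μ n) (fun s => ((g n s : ℝ) : EReal))) atTop)
    (hdef : ∀ n, IntegralDefined (μ n) (fun s => ((f n s : ℝ) : EReal)))
    (hdef' : IntegralDefined ν (fun s => liminf (fun n => ((f n s : ℝ) : EReal)) atTop))
    (hdefg : ∀ n, IntegralDefined (μ n) (fun s => ((g n s : ℝ) : EReal)))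
    (hdefg' : IntegralDefined ν (fun s => limsup (fun n => ((g n s : ℝ) : EReal)) atTop)) :
    eIntegral ν (fun s => liminf (fun n => ((f n s : ℝ) : EReal)) atTop)
      ≤ liminf (fun n => eIntegral (μ n) (fun s => ((f n s : ℝ) : EReal))) atTop :=
  fatou_setwise_prob_general μ ν hsw f hf g hg hfg hgbd hgle
end

section
/- Let S be a metric space and {f_n} a sequence of real-valued lower semi-continuous functions on S that semi-converges uniformly from below to a real-valued lower semi-continuous function f on S. If {f_n} converges pointwise to f on S, then {f_n} is lower semi-equicontinuous at every point of S. -/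
open Filter Metric Topology

/-- The sequence `{f_n}` is lower semi-equicontinuous at `s`. -/
def LowerSemiEquicontinuousAt {S : Type*} [MetricSpace S] (f : ℕ → S → ℝ) (s : S) : Prop :=
  ∀ ε : ℝ, 0 < ε → ∃ δ : ℝ, 0 < δ ∧ ∀ n : ℕ, ∀ s' ∈ Metric.ball s δ, f n s - ε < f n s'

/-- `{f_n}` semi-converges uniformly from below to `f`: for each `ε > 0` there is `N` with
`f_n(s) > f(s) − ε` for all `s` and all `n ≥ N`. -/
def SemiConvUniformlyBelow {S : Type*} (f : ℕ → S → ℝ) (g : S → ℝ) : Prop :=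
  ∀ ε : ℝ, 0 < ε → ∃ N : ℕ, ∀ n : ℕ, N ≤ n → ∀ s : S, g s - ε < f n s

/-! Lower semi-continuity of each `f n` handles the finitely many indices below some `M`; for
`n ≥ M` the three `ε / 3` estimates `f n s' > g s' - ε/3` (uniform semi-convergence),
`g s' > g s - ε/3` (lower semi-continuity of `g`) and `g s > f n s - ε/3` (pointwise convergence
at `s`) chain to `f n s' > f n s - ε` on a neighbourhood of `s` independent of `n`. -/

theorem lowerSemiEquicontinuousAt_iff_eventually {S : Type*} [MetricSpace S] {f : ℕ → S → ℝ}
    {s : S} :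
    LowerSemiEquicontinuousAt f s ↔ ∀ ε > 0, ∀ᶠ s' in 𝓝 s, ∀ n, f n s - ε < f n s' := by
  refine forall₂_congr fun ε _ => ?_
  rw [Metric.eventually_nhds_iff_ball]
  simp only [forall_comm (α := ℕ)]

theorem Filter.eventually_forall_nat_of_eventually_forall_ge {α : Type*} {l : Filter α}
    {p : ℕ → α → Prop} (M : ℕ) (hlt : ∀ n < M, ∀ᶠ x in l, p n x)
    (hge : ∀ᶠ x in l, ∀ n ≥ M, p n x) : ∀ᶠ x in l, ∀ n, p n x := by
  filter_upwards [(Set.finite_lt_nat M).eventually_all.2 hlt, hge] with x hxlt hxge n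
  rcases lt_or_ge n M with hn | hn
  exacts [hxlt n hn, hxge n hn]

theorem SemiConvUniformlyBelow.exists_eventually_forall_ge_sub_lt {S : Type*}
    [TopologicalSpace S] {f : ℕ → S → ℝ} {g : S → ℝ} {s : S} (hunif : SemiConvUniformlyBelow f g)
    (hg : LowerSemicontinuousAt g s) (hs : Tendsto (fun n => f n s) atTop (𝓝 (g s)))
    {ε : ℝ} (hε : 0 < ε) : ∃ M, ∀ᶠ s' in 𝓝 s, ∀ n ≥ M, f n s - ε < f n s' := by
  obtain ⟨N, hN⟩ := hunif (ε / 3) (by positivity)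
  obtain ⟨N', hN'⟩ := eventually_atTop.1 (hs.eventually_lt_const (by linarith : g s < g s + ε / 3))
  refine ⟨max N N', (hg (g s - ε / 3) (by linarith)).mono fun s' hgs' n hn => ?_⟩
  have hunif_n : g s' - ε / 3 < f n s' := hN n (le_of_max_le_left hn) s'
  have hptw_n : f n s < g s + ε / 3 := hN' n (le_of_max_le_right hn)
  linarith

/-- Corollary 3.2: a sequence of lower semi-continuous functions that semi-converges uniformly
from below and pointwise to a lower semi-continuous function is lower semi-equicontinuous. -/
theorem lowerSemiEquicontinuous_of_semiConvUniformlyBelow {S : Type*} [MetricSpace S]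
    (f : ℕ → S → ℝ) (g : S → ℝ)
    (hlsc : ∀ n, LowerSemicontinuous (f n)) (hglsc : LowerSemicontinuous g)
    (hunif : SemiConvUniformlyBelow f g)
    (hptw : ∀ s, Tendsto (fun n => f n s) atTop (𝓝 (g s))) :
    ∀ s : S, LowerSemiEquicontinuousAt f s := by
  intro s
  rw [lowerSemiEquicontinuousAt_iff_eventually]
  intro ε hε
  obtain ⟨M, htail⟩ := hunif.exists_eventually_forall_ge_sub_lt (hglsc s) (hptw s) hε
  exact eventually_forall_nat_of_eventually_forall_ge M
    (fun n _ => hlsc n s _ (sub_lt_self _ hε)) htail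
end

section
/- Let (S, Σ) be a measurable space, {μ_n} a sequence of measures converging setwise to a finite measure μ, and {f_n} a sequence of measurable extended-real-valued functions on S. If {f_n} lower semi-converges to a measurable real-valued function f in measure μ and the sequence of negative parts {f_n^-} is asymptotically uniformly integrable with respect to {μ_n}, then ∫_S f(s) μ(ds) ≤ liminf_{n→∞} ∫_S f_n(s) μ_n(ds), provided all integrals appearing are defined. -/
open MeasureTheory Filter Metric Topology
open scoped ENNReal

/-- The integral `∫_S |f(s)| 1{|f(s)| ≥ K} μ(ds)`. -/
noncomputable def tailIntegral {S : Type*} [MeasurableSpace S]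
    (μ : Measure S) (f : S → EReal) (K : ℝ) : ℝ≥0∞ :=
  ∫⁻ s in {s | (K : EReal) ≤ (f s).abs}, (f s).abs ∂μ

/-- `{f_n}` is asymptotically uniformly integrable w.r.t. `{μ_n}`. -/
def AUI {S : Type*} [MeasurableSpace S] (μ : ℕ → Measure S) (f : ℕ → S → EReal) : Prop :=
  Tendsto (fun K : ℝ => limsup (fun n => tailIntegral (μ n) (f n) K) atTop) atTop (𝓝 0)

/-- `{f_n}` lower semi-converges to `f` in measure `μ`:
`μ({s : f_n(s) ≤ f(s) − ε}) → 0` for every `ε > 0`. -/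
def LowerSemiConvInMeasureE {S : Type*} [MeasurableSpace S]
    (f : ℕ → S → EReal) (g : S → ℝ) (μ : Measure S) : Prop :=
  ∀ ε : ℝ, 0 < ε → Tendsto (fun n => μ {s | f n s ≤ ((g s : ℝ) : EReal) - (ε : EReal)})
    atTop (𝓝 0)

/-!
Shift by a level `K ≥ 0`. Pointwise `x⁺ + K ≤ (x + K)⁺ + x⁻` and
`(x + K)⁺ + x⁻ ≤ x⁺ + K + x⁻ 1{x⁻ ≥ K}`, hence `∫ f dμ ≤ ∫ (f + K)⁺ dμ - K μ(S)` and
`∫ (f_n + K)⁺ dμ_n - K μ_n(S) - T_n(K) ≤ ∫ f_n dμ_n`, where `T_n(K)` is the tail integral of `f_n⁻`.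
For the nonnegative functions `(f_n + K)⁺`, Fatou's lemma holds along setwise converging measures
(approximate by simple functions), and lower semi-convergence in measure may be replaced by lower
semi-convergence almost everywhere, since every subsequence has such a further subsequence
(Borel–Cantelli). As `μ_n(S) → μ(S)`, this gives `∫ f dμ - limsup_n T_n(K) ≤ liminf ∫ f_n dμ_n`,
and asymptotic uniform integrability says `limsup_n T_n(K) → 0` as `K → ∞`.
-/

open scoped NNReal

namespace EReal

lemma abs_max_zero (x : EReal) : (max x 0).abs = x.toENNReal := by
  induction x using EReal.rec with
  | bot => simp
  | top => simp
  | coe r =>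
    rcases le_total (r : EReal) 0 with h | h
    · rw [max_eq_right h, abs_zero, toENNReal_of_nonpos h]
    · rw [max_eq_left h, abs_def, abs_of_nonneg (by exact_mod_cast h : (0 : ℝ) ≤ r),
        real_coe_toENNReal]

lemma toENNReal_add_coe_add_min {K : ℝ} (hK : 0 ≤ K) (x : EReal) :
    (x + K).toENNReal + min (-x).toENNReal (ENNReal.ofReal K)
      = x.toENNReal + ENNReal.ofReal K := by
  induction x using EReal.rec with
  | bot => simp
  | top => simp
  | coe r =>
    rw [← coe_add, ← coe_neg]
    simp only [real_coe_toENNReal, ← ENNReal.ofReal_min]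
    rcases le_total 0 r with hr | hr
    · rw [ENNReal.ofReal_add hr hK, min_eq_left (by linarith),
        ENNReal.ofReal_of_nonpos (p := -r) (by linarith), add_zero]
    rcases le_total 0 (r + K) with hrK | hrK
    · rw [min_eq_left (by linarith), ← ENNReal.ofReal_add hrK (by linarith),
        ENNReal.ofReal_of_nonpos hr, zero_add]
      ring_nf
    · rw [min_eq_right (by linarith), ENNReal.ofReal_of_nonpos hrK, ENNReal.ofReal_of_nonpos hr]

lemma toENNReal_add_ofReal_le {K : ℝ} (hK : 0 ≤ K) (x : EReal) :
    x.toENNReal + ENNReal.ofReal K ≤ (x + K).toENNReal + (-x).toENNReal := by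
  rw [← toENNReal_add_coe_add_min hK]
  gcongr
  exact min_le_left _ _

lemma toENNReal_add_coe_add_toENNReal_neg_le {K : ℝ} (hK : 0 ≤ K) (x : EReal) :
    (x + K).toENNReal + (-x).toENNReal ≤ x.toENNReal + ENNReal.ofReal K +
      {y : EReal | (K : EReal) ≤ (-y).toENNReal}.indicator (fun y => (-y).toENNReal) x := by
  rw [← toENNReal_add_coe_add_min hK, add_assoc]
  gcongr
  rw [Set.indicator_apply]
  split_ifs with h
  · exact le_add_self
  · rw [Set.mem_ofPred_eq, ← max_eq_left hK, ← coe_ennreal_ofReal,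
      coe_ennreal_le_coe_ennreal_iff] at h
    rw [add_zero, min_eq_left (not_le.mp h).le]

lemma continuous_add_coe (K : ℝ) : Continuous fun x : EReal => x + K :=
  continuous_iff_continuousAt.2 fun _ =>
    (continuousAt_add (.inr (coe_ne_bot K)) (.inr (coe_ne_top K))).comp
      (continuous_id.prodMk continuous_const).continuousAt

lemma liminf_sub_limsup_le {α : Type*} {l : Filter α} (u v : α → EReal) :
    liminf u l - limsup v l ≤ liminf (u - v) l := by
  rw [sub_eq_add_neg, ← liminf_neg, sub_eq_add_neg]
  exact le_liminf_add

lemma coe_ennreal_liminf {α : Type*} {l : Filter α} [l.NeBot] (u : α → ℝ≥0∞) :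
    ((liminf u l : ℝ≥0∞) : EReal) = liminf (fun x => (u x : EReal)) l :=
  Monotone.map_liminf_of_continuousAt (fun _ _ => coe_ennreal_le_coe_ennreal_iff.2) u
    continuous_coe_ennreal_ereal.continuousAt

lemma coe_ennreal_limsup {α : Type*} {l : Filter α} [l.NeBot] (u : α → ℝ≥0∞) :
    ((limsup u l : ℝ≥0∞) : EReal) = limsup (fun x => (u x : EReal)) l :=
  Monotone.map_limsup_of_continuousAt (fun _ _ => coe_ennreal_le_coe_ennreal_iff.2) u
    continuous_coe_ennreal_ereal.continuousAt

lemma le_of_tendsto_of_eventually_sub_le {α : Type*} {l : Filter α} [l.NeBot] {a b : EReal}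
    {t : α → ℝ≥0∞} (ht : Tendsto t l (𝓝 0)) (h : ∀ᶠ x in l, a - t x ≤ b) : a ≤ b := by
  have hneg : Tendsto (fun x => -(t x : EReal)) l (𝓝 0) := by
    simpa using ((continuous_coe_ennreal_ereal.tendsto 0).comp ht).neg
  have hsub := ((continuousAt_add (.inr zero_ne_bot) (.inr zero_ne_top)).tendsto.comp
      (tendsto_const_nhds (x := a) |>.prodMk_nhds hneg))
  rw [add_zero] at hsub
  exact le_of_tendsto hsub h

end EReal

-- Nothing is needed of `x` and `w`: in `EReal`, `x - ⊤ = ⊥` even for `x = ⊤`.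
lemma ENNReal.coe_sub_le_coe_sub_of_add_le_add {x y z w : ℝ≥0∞} (h : x + y ≤ z + w)
    (hzy : z ≠ ⊤ ∨ y ≠ ⊤) : (x : EReal) - w ≤ (z : EReal) - y := by
  rcases eq_or_ne w ⊤ with rfl | hw
  · simp [EReal.sub_top]
  have hy : y ≠ ⊤ := by
    rintro rfl
    have hz : z ≠ ⊤ := hzy.resolve_right (not_not.mpr rfl)
    simp [hz, hw] at h
  rcases eq_or_ne z ⊤ with rfl | hz
  · simp [EReal.top_sub (EReal.coe_ennreal_eq_top_iff.not.mpr hy)]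
  have hx : x ≠ ⊤ := ne_top_of_le_ne_top (ENNReal.add_ne_top.mpr ⟨hz, hw⟩) (le_self_add.trans h)
  lift x to ℝ≥0 using hx
  lift y to ℝ≥0 using hy
  lift z to ℝ≥0 using hz
  lift w to ℝ≥0 using hw
  simp only [EReal.coe_nnreal_eq_coe_real, ← EReal.coe_sub, EReal.coe_le_coe_iff]
  have : (x : ℝ) + y ≤ z + w := by exact_mod_cast h
  linarith

lemma le_liminf_of_forall_strictMono_exists {α : Type*} [CompleteLinearOrder α]
    [DenselyOrdered α] {u : ℕ → α} {a : α}
    (h : ∀ φ : ℕ → ℕ, StrictMono φ → ∃ ψ : ℕ → ℕ, StrictMono ψ ∧ a ≤ liminf (u ∘ φ ∘ ψ) atTop) :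
    a ≤ liminf u atTop := by
  by_contra! hlt
  obtain ⟨b, hub, hba⟩ := exists_between hlt
  obtain ⟨φ, hφ, hφb⟩ :=
    extraction_of_frequently_atTop (frequently_lt_of_liminf_lt (by isBoundedDefault) hub)
  obtain ⟨ψ, -, hψ⟩ := h φ hφ
  exact hba.not_ge
    (hψ.trans (liminf_le_of_frequently_le' (Frequently.of_forall fun n => (hφb _).le)))

namespace SetwiseConv

variable {S : Type*} [MeasurableSpace S] {μ : ℕ → Measure S} {ν : Measure S}

lemma comp (hsw : SetwiseConv μ ν) {φ : ℕ → ℕ} (hφ : StrictMono φ) : SetwiseConv (μ ∘ φ) ν :=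
  fun C hC => (hsw C hC).comp hφ.tendsto_atTop

lemma tendsto_lintegral_simpleFunc (hsw : SetwiseConv μ ν) (φ : SimpleFunc S ℝ≥0) :
    Tendsto (fun n => (φ.map ((↑) : ℝ≥0 → ℝ≥0∞)).lintegral (μ n)) atTop
      (𝓝 ((φ.map ((↑) : ℝ≥0 → ℝ≥0∞)).lintegral ν)) := by
  refine tendsto_finsetSum _ fun x hx => ?_
  refine ENNReal.Tendsto.const_mul (hsw _ (SimpleFunc.measurableSet_fiber _ _)) (.inr ?_)
  obtain ⟨s, rfl⟩ := SimpleFunc.mem_range.mp hx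
  exact ENNReal.coe_ne_top

lemma lintegral_le_liminf (hsw : SetwiseConv μ ν) (w : S → ℝ≥0∞) :
    ∫⁻ s, w s ∂ν ≤ liminf (fun n => ∫⁻ s, w s ∂μ n) atTop := by
  rw [lintegral_eq_nnreal]
  refine iSup₂_le fun φ hφ => ?_
  rw [← (hsw.tendsto_lintegral_simpleFunc φ).liminf_eq]
  refine liminf_le_liminf (Eventually.of_forall fun n => ?_)
  rw [← SimpleFunc.lintegral_eq_lintegral]
  exact lintegral_mono fun s => by simpa using hφ s

lemma lintegral_liminf_le (hsw : SetwiseConv μ ν) {w : ℕ → S → ℝ≥0∞}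
    (hw : ∀ n, Measurable (w n)) :
    ∫⁻ s, liminf (fun n => w n s) atTop ∂ν ≤ liminf (fun n => ∫⁻ s, w n s ∂μ n) atTop := by
  calc ∫⁻ s, liminf (fun n => w n s) atTop ∂ν
      = ∫⁻ s, ⨆ m, ⨅ i ≥ m, w i s ∂ν := lintegral_congr fun s => liminf_eq_iSup_iInf_of_nat
    _ = ⨆ m, ∫⁻ s, ⨅ i ≥ m, w i s ∂ν :=
      lintegral_iSup (fun m => .iInf fun i => .iInf fun _ => hw i)
        (fun a b hab s => biInf_mono fun i hi => hab.trans hi)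
    _ ≤ liminf (fun n => ∫⁻ s, w n s ∂μ n) atTop := by
      refine iSup_le fun m => (hsw.lintegral_le_liminf _).trans (liminf_le_liminf ?_)
      filter_upwards [eventually_ge_atTop m] with n hn
      exact lintegral_mono fun s => biInf_le (fun i => w i s) hn

lemma limsup_const_mul_measure_univ_add_le [IsFiniteMeasure ν] (hsw : SetwiseConv μ ν)
    {c : ℝ≥0∞} (hc : c ≠ ⊤) (T : ℕ → ℝ≥0∞) :
    limsup (fun n => ((c * μ n Set.univ + T n : ℝ≥0∞) : EReal)) atTop
      ≤ ((c * ν Set.univ : ℝ≥0∞) : EReal) + (limsup T atTop : ℝ≥0∞) := by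
  have hlim : Tendsto (fun n => ((c * μ n Set.univ : ℝ≥0∞) : EReal)) atTop
      (𝓝 (c * ν Set.univ : ℝ≥0∞)) :=
    (continuous_coe_ennreal_ereal.tendsto _).comp
      (ENNReal.Tendsto.const_mul (hsw _ MeasurableSet.univ) (.inr hc))
  simp_rw [EReal.coe_ennreal_add]
  refine (EReal.limsup_add_le (.inl ?_) (.inl ?_)).trans_eq ?_
  all_goals rw [hlim.limsup_eq]
  · exact EReal.coe_ennreal_ne_bot _
  · exact EReal.coe_ennreal_eq_top_iff.not.mpr (ENNReal.mul_ne_top hc (measure_ne_top ν _))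
  · rw [EReal.coe_ennreal_limsup]

end SetwiseConv

namespace LowerSemiConvInMeasureE

variable {S : Type*} [MeasurableSpace S] {f : ℕ → S → EReal} {g : S → ℝ} {ν : Measure S}

lemma comp (h : LowerSemiConvInMeasureE f g ν) {φ : ℕ → ℕ} (hφ : StrictMono φ) :
    LowerSemiConvInMeasureE (f ∘ φ) g ν :=
  fun ε hε => (h ε hε).comp hφ.tendsto_atTop

-- Borel–Cantelli, with `ε = 1 / (k + 1)` and the exceptional sets of measure below `2⁻ᵏ`.
lemma exists_strictMono_ae_le_liminf (h : LowerSemiConvInMeasureE f g ν) :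
    ∃ ψ : ℕ → ℕ, StrictMono ψ ∧ ∀ᵐ s ∂ν, (g s : EReal) ≤ liminf (fun k => f (ψ k) s) atTop := by
  obtain ⟨ψ, hψ, hψsmall⟩ := extraction_forall_of_eventually fun k : ℕ =>
    (h (1 / (k + 1)) (by positivity)).eventually_lt_const (ENNReal.pow_pos (a := 2⁻¹) (by simp) k)
  refine ⟨ψ, hψ, ?_⟩
  have hsum : ∑' k : ℕ, ν {s | f (ψ k) s ≤ (g s : EReal) - ((1 / (k + 1) : ℝ) : EReal)} ≠ ⊤ :=
    ne_top_of_le_ne_top (by simp [ENNReal.tsum_geometric, ENNReal.one_sub_inv_two])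
      (ENNReal.tsum_le_tsum fun k => (hψsmall k).le)
  filter_upwards [ae_eventually_notMem hsum] with s hs
  have hlim : Tendsto (fun k : ℕ => ((g s - 1 / (k + 1) : ℝ) : EReal)) atTop (𝓝 (g s)) :=
    (continuous_coe_real_ereal.tendsto _).comp
      (by simpa using (tendsto_const_nhds (x := g s)).sub tendsto_one_div_add_atTop_nhds_zero_nat)
  rw [← hlim.liminf_eq]
  exact liminf_le_liminf (hs.mono fun k hk => (not_le.mp hk).le)

end LowerSemiConvInMeasureE

lemma SetwiseConv.lintegral_le_liminf_of_lowerSemiConv {S : Type*} [MeasurableSpace S]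
    {μ : ℕ → Measure S} {ν : Measure S} (hsw : SetwiseConv μ ν) {f : ℕ → S → EReal}
    (hf : ∀ n, Measurable (f n)) {g : S → ℝ} (hconv : LowerSemiConvInMeasureE f g ν)
    {h : EReal → ℝ≥0∞} (hmono : Monotone h) (hcont : Continuous h) :
    ∫⁻ s, h (g s) ∂ν ≤ liminf (fun n => ∫⁻ s, h (f n s) ∂μ n) atTop := by
  -- Every subsequence has a further one lower semi-converging a.e., where Fatou's lemma applies.
  refine le_liminf_of_forall_strictMono_exists fun φ hφ => ?_
  obtain ⟨ψ, hψ, hae⟩ := (hconv.comp hφ).exists_strictMono_ae_le_liminf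
  refine ⟨ψ, hψ, ?_⟩
  calc ∫⁻ s, h (g s) ∂ν ≤ ∫⁻ s, liminf (fun k => h (f (φ (ψ k)) s)) atTop ∂ν := by
        refine lintegral_mono_ae (hae.mono fun s hs => ?_)
        rw [← Function.comp_def h, ← hmono.map_liminf_of_continuousAt _ hcont.continuousAt]
        exact hmono hs
    _ ≤ _ := (hsw.comp (hφ.comp hψ)).lintegral_liminf_le fun k => hcont.measurable.comp (hf _)

section Integrals

variable {S : Type*} [MeasurableSpace S] (μ : Measure S) {f : S → EReal}

lemma eIntegral_eq_sub :
    eIntegral μ f = (∫⁻ s, (f s).toENNReal ∂μ : EReal) - (∫⁻ s, (-f s).toENNReal ∂μ : ℝ≥0∞) := by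
  simp only [eIntegral, EReal.posENN, EReal.negENN, EReal.abs_max_zero]

lemma integralDefined_iff :
    IntegralDefined μ f ↔ ∫⁻ s, (f s).toENNReal ∂μ ≠ ⊤ ∨ ∫⁻ s, (-f s).toENNReal ∂μ ≠ ⊤ := by
  simp only [IntegralDefined, EReal.posENN, EReal.negENN, EReal.abs_max_zero]

lemma lintegral_toENNReal_add_le (hf : Measurable f) {K : ℝ} (hK : 0 ≤ K) :
    ∫⁻ s, (f s).toENNReal ∂μ + ENNReal.ofReal K * μ Set.univ
      ≤ ∫⁻ s, (f s + K).toENNReal ∂μ + ∫⁻ s, (-f s).toENNReal ∂μ := by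
  rw [← lintegral_const, ← lintegral_add_right _ measurable_const,
    ← lintegral_add_left (hf.add_const _).ereal_toENNReal]
  exact lintegral_mono fun s => EReal.toENNReal_add_ofReal_le hK (f s)

lemma lintegral_toENNReal_add_coe_add_le (hf : Measurable f) {K : ℝ} (hK : 0 ≤ K) :
    ∫⁻ s, (f s + K).toENNReal ∂μ + ∫⁻ s, (-f s).toENNReal ∂μ
      ≤ ∫⁻ s, (f s).toENNReal ∂μ
        + (ENNReal.ofReal K * μ Set.univ + tailIntegral μ (fun s => max (-f s) 0) K) := by
  have htail :
      ∫⁻ s, {s | (K : EReal) ≤ (-f s).toENNReal}.indicator (fun s => (-f s).toENNReal) s ∂μ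
        ≤ tailIntegral μ (fun s => max (-f s) 0) K := by
    simp only [tailIntegral, EReal.abs_max_zero]
    exact lintegral_indicator_le _ _
  calc ∫⁻ s, (f s + K).toENNReal ∂μ + ∫⁻ s, (-f s).toENNReal ∂μ
      ≤ ∫⁻ s, ((f s + K).toENNReal + (-f s).toENNReal) ∂μ := le_lintegral_add _ _
    _ ≤ ∫⁻ s, ((f s).toENNReal + ENNReal.ofReal K
          + {s | (K : EReal) ≤ (-f s).toENNReal}.indicator (fun s => (-f s).toENNReal) s) ∂μ :=
      lintegral_mono fun s => EReal.toENNReal_add_coe_add_toENNReal_neg_le hK (f s)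
    _ = ∫⁻ s, (f s).toENNReal ∂μ + (ENNReal.ofReal K * μ Set.univ
          + ∫⁻ s, {s | (K : EReal) ≤ (-f s).toENNReal}.indicator (fun s => (-f s).toENNReal) s
              ∂μ) := by
      rw [lintegral_add_left
        (hf.ereal_toENNReal.add_const _ : Measurable fun s => (f s).toENNReal + ENNReal.ofReal K),
        lintegral_add_right _ measurable_const, lintegral_const, add_assoc]
    _ ≤ _ := by gcongr

lemma eIntegral_le_lintegral_add_coe_sub [IsFiniteMeasure μ] (hf : Measurable f) {K : ℝ}
    (hK : 0 ≤ K) :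
    eIntegral μ f
      ≤ (∫⁻ s, (f s + K).toENNReal ∂μ : EReal) - (ENNReal.ofReal K * μ Set.univ : ℝ≥0∞) := by
  rw [eIntegral_eq_sub]
  exact ENNReal.coe_sub_le_coe_sub_of_add_le_add (lintegral_toENNReal_add_le μ hf hK)
    (.inr (ENNReal.mul_ne_top ENNReal.ofReal_ne_top (measure_ne_top μ _)))

lemma lintegral_add_coe_sub_le_eIntegral (hf : Measurable f) (hd : IntegralDefined μ f) {K : ℝ}
    (hK : 0 ≤ K) :
    (∫⁻ s, (f s + K).toENNReal ∂μ : EReal)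
      - (ENNReal.ofReal K * μ Set.univ + tailIntegral μ (fun s => max (-f s) 0) K : ℝ≥0∞)
      ≤ eIntegral μ f := by
  rw [eIntegral_eq_sub]
  exact ENNReal.coe_sub_le_coe_sub_of_add_le_add (lintegral_toENNReal_add_coe_add_le μ hf hK)
    ((integralDefined_iff μ).mp hd)

end Integrals

lemma eIntegral_sub_limsup_tailIntegral_le_liminf {S : Type*} [MeasurableSpace S]
    {μ : ℕ → Measure S} {ν : Measure S} [IsFiniteMeasure ν] (hsw : SetwiseConv μ ν)
    {f : ℕ → S → EReal} (hf : ∀ n, Measurable (f n)) {g : S → ℝ} (hg : Measurable g)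
    (hconv : LowerSemiConvInMeasureE f g ν) (hdef : ∀ n, IntegralDefined (μ n) (f n))
    {K : ℝ} (hK : 0 ≤ K) :
    eIntegral ν (fun s => (g s : EReal))
        - (limsup (fun n => tailIntegral (μ n) (fun s => max (-f n s) 0) K) atTop : ℝ≥0∞)
      ≤ liminf (fun n => eIntegral (μ n) (f n)) atTop := by
  set P : ℕ → ℝ≥0∞ := fun n => ∫⁻ s, (f n s + K).toENNReal ∂μ n
  set T : ℕ → ℝ≥0∞ := fun n => tailIntegral (μ n) (fun s => max (-f n s) 0) K
  have hfatou : ∫⁻ s, ((g s : EReal) + K).toENNReal ∂ν ≤ liminf P atTop :=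
    hsw.lintegral_le_liminf_of_lowerSemiConv hf hconv (h := fun x => (x + K).toENNReal)
      (fun _ _ hxy => EReal.toENNReal_le_toENNReal (by gcongr))
      (EReal.continuous_toENNReal.comp (EReal.continuous_add_coe K))
  calc eIntegral ν (fun s => (g s : EReal)) - (limsup T atTop : ℝ≥0∞)
      ≤ (∫⁻ s, ((g s : EReal) + K).toENNReal ∂ν : EReal)
          - (ENNReal.ofReal K * ν Set.univ : ℝ≥0∞) - (limsup T atTop : ℝ≥0∞) :=
        EReal.sub_le_sub (eIntegral_le_lintegral_add_coe_sub ν hg.coe_real_ereal hK) le_rfl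
    _ = (∫⁻ s, ((g s : EReal) + K).toENNReal ∂ν : EReal)
          - (((ENNReal.ofReal K * ν Set.univ : ℝ≥0∞) : EReal) + (limsup T atTop : ℝ≥0∞)) := by
        simp only [sub_eq_add_neg]
        rw [add_assoc,
          EReal.neg_add (.inl (EReal.coe_ennreal_ne_bot _)) (.inr (EReal.coe_ennreal_ne_bot _)),
          sub_eq_add_neg]
    _ ≤ ((liminf P atTop : ℝ≥0∞) : EReal)
          - limsup (fun n => ((ENNReal.ofReal K * μ n Set.univ + T n : ℝ≥0∞) : EReal)) atTop :=
        EReal.sub_le_sub (EReal.coe_ennreal_le_coe_ennreal_iff.mpr hfatou)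
          (hsw.limsup_const_mul_measure_univ_add_le ENNReal.ofReal_ne_top T)
    _ ≤ liminf (fun n => (P n : EReal) - (ENNReal.ofReal K * μ n Set.univ + T n : ℝ≥0∞)) atTop := by
        rw [EReal.coe_ennreal_liminf]
        exact EReal.liminf_sub_limsup_le _ _
    _ ≤ liminf (fun n => eIntegral (μ n) (f n)) atTop :=
        liminf_le_liminf (Eventually.of_forall fun n =>
          lintegral_add_coe_sub_le_eIntegral (μ n) (hf n) (hdef n) hK)

theorem fatou_classic_setwise_general {S : Type*} [MeasurableSpace S]
    (μ : ℕ → Measure S) (ν : Measure S) [IsFiniteMeasure ν] (hsw : SetwiseConv μ ν)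
    (f : ℕ → S → EReal) (hf : ∀ n, Measurable (f n))
    (g : S → ℝ) (hg : Measurable g)
    (hconv : LowerSemiConvInMeasureE f g ν)
    (haui : AUI μ (fun n s => max (-(f n s)) 0))
    (hdef : ∀ n, IntegralDefined (μ n) (f n)) :
    eIntegral ν (fun s => ((g s : ℝ) : EReal))
      ≤ liminf (fun n => eIntegral (μ n) (f n)) atTop :=
  EReal.le_of_tendsto_of_eventually_sub_le haui <| (eventually_ge_atTop 0).mono fun _ hK =>
    eIntegral_sub_limsup_tailIntegral_le_liminf hsw hf hg hconv hdef hK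

/-- Fatou's lemma in its classic form for setwise converging measures (Theorem 4.2). -/
theorem fatou_classic_setwise {S : Type*} [MeasurableSpace S]
    (μ : ℕ → Measure S) (ν : Measure S) [IsFiniteMeasure ν] (hsw : SetwiseConv μ ν)
    (f : ℕ → S → EReal) (hf : ∀ n, Measurable (f n))
    (g : S → ℝ) (hg : Measurable g)
    (hconv : LowerSemiConvInMeasureE f g ν)
    (haui : AUI μ (fun n s => max (-(f n s)) 0))
    (hdef : ∀ n, IntegralDefined (μ n) (f n))
    (hdef' : IntegralDefined ν (fun s => ((g s : ℝ) : EReal))) :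
    eIntegral ν (fun s => ((g s : ℝ) : EReal))
      ≤ liminf (fun n => eIntegral (μ n) (f n)) atTop :=
  fatou_classic_setwise_general μ ν hsw f hf g hg hconv haui hdef
end
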